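/- arXiv:2008.04188 — 3 statements merged into one kernel-verified Lean document; each statement's English description precedes it below -/
import Mathlib

section
/- Let μ, κ ∈ ℝ and define Wlin : ℝ^{2×2} → ℝ by Wlin(H) = μ·‖dev₂ sym H‖² + (κ/2)·(tr H)². Then for all ξ, η ∈ ℝ², Wlin(ξηᵀ) = (μ/2)·|ξ|²·|η|² + (κ/2)·⟨ξ,η⟩². -/
open Real Set Matrix

/-- Squared Frobenius norm of a 2×2 real matrix. -/
noncomputable def frobSq (X : Matrix (Fin 2) (Fin 2) ℝ) : ℝ := ∑ i, ∑ j, (X i j) ^ 2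

/-- Symmetric part `sym X = (X + Xᵀ)/2`. -/
noncomputable def symPart (X : Matrix (Fin 2) (Fin 2) ℝ) : Matrix (Fin 2) (Fin 2) ℝ :=
  (1 / 2 : ℝ) • (X + Xᵀ)

/-- Planar deviatoric part `dev₂ X = X − (tr X / 2) 𝟙`. -/
noncomputable def dev2 (X : Matrix (Fin 2) (Fin 2) ℝ) : Matrix (Fin 2) (Fin 2) ℝ :=
  X - (Matrix.trace X / 2) • (1 : Matrix (Fin 2) (Fin 2) ℝ)

/-- Quadratic energy of planar isotropic linear elasticity:
`Wlin(H) = μ ‖dev₂ sym H‖² + (κ/2)(tr H)²`. -/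
noncomputable def Wlin (μ κ : ℝ) (H : Matrix (Fin 2) (Fin 2) ℝ) : ℝ :=
  μ * frobSq (dev2 (symPart H)) + κ / 2 * (Matrix.trace H) ^ 2

/-- Evaluation of the linear-elastic energy on rank-one matrices:
`Wlin(ξηᵀ) = (μ/2)|ξ|²|η|² + (κ/2)⟨ξ,η⟩²`. -/
theorem Wlin_rankOne (μ κ : ℝ) :
    ∀ ξ η : Fin 2 → ℝ,
      Wlin μ κ (Matrix.vecMulVec ξ η)
        = μ / 2 * (∑ i, (ξ i) ^ 2) * (∑ i, (η i) ^ 2) + κ / 2 * (∑ i, ξ i * η i) ^ 2 := by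
  intro ξ η
  simp only [Wlin, frobSq, dev2, symPart, Matrix.trace, Matrix.vecMulVec, Matrix.diag,
    Fin.sum_univ_two, Matrix.sub_apply, Matrix.add_apply, Matrix.smul_apply, Matrix.of_apply,
    Matrix.transpose_apply, Matrix.one_apply, smul_eq_mul]
  norm_num
  ring
end

section
/- Let μ, κ ∈ ℝ and define Wlin : ℝ^{2×2} → ℝ by Wlin(H) = μ·‖dev₂ sym H‖² + (κ/2)·(tr H)². Then Wlin is rank-one convex (i.e. for every A ∈ ℝ^{2×2} and all ξ, η ∈ ℝ², the map t ↦ Wlin(A + t·ξηᵀ) is convex on ℝ) if and only if μ ≥ 0 and μ + κ ≥ 0. -/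
open Real Set Matrix

lemma Wlin_expand (μ κ : ℝ) (A : Matrix (Fin 2) (Fin 2) ℝ) (ξ η : Fin 2 → ℝ) (t : ℝ) :
    Wlin μ κ (A + t • Matrix.vecMulVec ξ η)
      = (μ/2*((ξ 0)^2+(ξ 1)^2)*((η 0)^2+(η 1)^2) + κ/2*(ξ 0*η 0+ξ 1*η 1)^2) * t^2
        + (Wlin μ κ (A + (1:ℝ) • Matrix.vecMulVec ξ η) - Wlin μ κ (A + (-1:ℝ) • Matrix.vecMulVec ξ η))/2 * t
        + Wlin μ κ A := by
  simp only [Wlin, frobSq, dev2, symPart, Matrix.trace, Matrix.diag, Fin.sum_univ_two,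
    Matrix.add_apply, Matrix.sub_apply, Matrix.smul_apply, Matrix.vecMulVec_apply,
    Matrix.transpose_apply, Matrix.one_apply, smul_eq_mul]
  norm_num
  ring

lemma Wlin_expand' (μ κ : ℝ) (A : Matrix (Fin 2) (Fin 2) ℝ) (ξ η : Fin 2 → ℝ) :
    ∃ bb cc : ℝ, ∀ t : ℝ, Wlin μ κ (A + t • Matrix.vecMulVec ξ η)
      = (μ/2*((ξ 0)^2+(ξ 1)^2)*((η 0)^2+(η 1)^2) + κ/2*(ξ 0*η 0+ξ 1*η 1)^2) * t^2
        + bb * t + cc :=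
  ⟨_, _, Wlin_expand μ κ A ξ η⟩

/-- **Rank-one convexity in planar isotropic linear elasticity.**
`Wlin(H) = μ ‖dev₂ sym H‖² + (κ/2)(tr H)²` is rank-one convex (convex along all
rank-one lines in `ℝ^{2×2}`) if and only if `μ ≥ 0` and `μ + κ ≥ 0`. -/
theorem Wlin_rankOneConvex_iff (μ κ : ℝ) :
    (∀ A : Matrix (Fin 2) (Fin 2) ℝ, ∀ ξ η : Fin 2 → ℝ,
        ConvexOn ℝ Set.univ (fun t : ℝ => Wlin μ κ (A + t • Matrix.vecMulVec ξ η)))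
      ↔ (0 ≤ μ ∧ 0 ≤ μ + κ) := by
  constructor
  · intro h
    have key : ∀ ξ η : Fin 2 → ℝ,
        0 ≤ μ/2*((ξ 0)^2+(ξ 1)^2)*((η 0)^2+(η 1)^2) + κ/2*(ξ 0*η 0+ξ 1*η 1)^2 := by
      intro ξ η
      obtain ⟨bb, cc, hf⟩ := Wlin_expand' μ κ 0 ξ η
      have := (h 0 ξ η).2 (Set.mem_univ (-1:ℝ)) (Set.mem_univ (1:ℝ))
        (by norm_num : (0:ℝ) ≤ 1/2) (by norm_num : (0:ℝ) ≤ 1/2) (by norm_num)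
      simp only [hf, smul_eq_mul] at this
      nlinarith [this]
    constructor
    · have := key ![1, 0] ![0, 1]
      norm_num at this
      linarith
    · have := key ![1, 0] ![1, 0]
      norm_num at this
      linarith
  · rintro ⟨hμ, hμκ⟩ A ξ η
    obtain ⟨bb, cc, hf⟩ := Wlin_expand' μ κ A ξ η
    set Q := μ/2*((ξ 0)^2+(ξ 1)^2)*((η 0)^2+(η 1)^2) + κ/2*(ξ 0*η 0+ξ 1*η 1)^2 with hQ
    have hq0 : 0 ≤ μ/2*((ξ 0)^2+(ξ 1)^2)*((η 0)^2+(η 1)^2) + κ/2*(ξ 0*η 0+ξ 1*η 1)^2 := by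
      rcases le_or_gt 0 κ with hκ | hκ
      · nlinarith [mul_nonneg (mul_nonneg hμ (by positivity : (0:ℝ) ≤ (ξ 0)^2+(ξ 1)^2))
          (by positivity : (0:ℝ) ≤ (η 0)^2+(η 1)^2),
          mul_nonneg hκ (sq_nonneg (ξ 0*η 0+ξ 1*η 1))]
      · nlinarith [mul_nonneg hμκ (sq_nonneg (ξ 0*η 0+ξ 1*η 1)),
          mul_nonneg hμ (sq_nonneg (ξ 0*η 1 - ξ 1*η 0))]
    rw [← hQ] at hq0
    clear_value Q
    clear hQ
    refine ⟨convex_univ, ?_⟩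
    intro x _ y _ a b ha hb hab
    simp only [hf, smul_eq_mul]
    have hb1 : b = 1 - a := by linarith
    subst hb1
    nlinarith [mul_nonneg (mul_nonneg (mul_nonneg hq0 ha) (by linarith : (0:ℝ) ≤ 1 - a)) (sq_nonneg (x - y))]
end

section
/- Let μ ∈ ℝ and let f : (0,∞) → ℝ be twice continuously differentiable near 1 with f'(1) = −μ, and define W(F) = (μ/2)·‖F‖² + f(det F) for F ∈ GL⁺(2). Then, as H → 0 in ℝ^{2×2}, W(I₂ + H) = W(I₂) + μ·‖dev₂ sym H‖² + (f''(1)/2)·(tr H)² + o(‖H‖²); that is, the remainder W(I₂+H) − W(I₂) − μ·‖dev₂ sym H‖² − (f''(1)/2)·(tr H)² is little-o of ‖H‖² as H → 0. -/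
open Real Set Matrix Asymptotics

open Filter

lemma taylor2_isLittleO {f : ℝ → ℝ} (hf : ContDiffAt ℝ 2 f 1) :
    (fun x => f x - f 1 - deriv f 1 * (x - 1) - deriv (deriv f) 1 / 2 * (x - 1) ^ 2)
      =o[nhds 1] fun x => (x - 1) ^ 2 := by
  have h1 : ContDiffAt ℝ 1 (fderiv ℝ f) 1 := hf.fderiv_right (by norm_num)
  have hdf : ContDiffAt ℝ 1 (deriv f) 1 := by
    have := (ContinuousLinearMap.apply ℝ ℝ (1:ℝ)).contDiff.contDiffAt.comp 1 h1
    exact this.congr_of_eventuallyEq (by filter_upwards with y; rfl)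
  set c := deriv (deriv f) 1 with hc_def
  have hc : HasDerivAt (deriv f) c 1 := (hdf.differentiableAt one_ne_zero).hasDerivAt
  have hev : ∀ᶠ y in nhds 1, DifferentiableAt ℝ f y := by
    filter_upwards [hf.eventually (by norm_num)] with y hy
    exact hy.differentiableAt (by norm_num)
  rw [isLittleO_iff]
  intro ε hε
  have hd' := (hasDerivAt_iff_isLittleO.mp hc).def (half_pos hε)
  have hcomb : ∀ᶠ y in nhds 1,
      DifferentiableAt ℝ f y ∧ ‖deriv f y - deriv f 1 - (y - 1) • c‖ ≤ ε / 2 * ‖y - 1‖ :=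
    hev.and hd'
  rw [Metric.eventually_nhds_iff] at hcomb
  obtain ⟨δ, hδ, hball⟩ := hcomb
  rw [Metric.eventually_nhds_iff]
  refine ⟨δ, hδ, fun x hx => ?_⟩
  set φ : ℝ → ℝ := fun y => f y - f 1 - deriv f 1 * (y - 1) - c / 2 * (y - 1) ^ 2 with hφ
  have hsub : ∀ y ∈ uIcc (1:ℝ) x, dist y 1 < δ := by
    intro y hy
    have := abs_sub_left_of_mem_uIcc hy
    calc dist y 1 = |y - 1| := by rw [Real.dist_eq]
      _ ≤ |x - 1| := this
      _ = dist x 1 := (Real.dist_eq x 1).symm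
      _ < δ := hx
  have hderiv : ∀ y ∈ uIcc (1:ℝ) x,
      HasDerivWithinAt φ (deriv f y - deriv f 1 - c * (y - 1)) (uIcc (1:ℝ) x) y := by
    intro y hy
    have hfy : HasDerivAt f (deriv f y) y := ((hball (hsub y hy)).1).hasDerivAt
    have h2 : HasDerivAt (fun y : ℝ => deriv f 1 * (y - 1)) (deriv f 1) y := by
      simpa using ((hasDerivAt_id y).sub_const 1).const_mul (deriv f 1)
    have h3 : HasDerivAt (fun y : ℝ => c / 2 * (y - 1) ^ 2) (c * (y - 1)) y := by
      have := (((hasDerivAt_id y).sub_const 1).pow 2).const_mul (c / 2)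
      refine this.congr_deriv ?_
      simp [id_eq]
      ring
    exact (((hfy.sub_const (f 1)).sub h2).sub h3).hasDerivWithinAt
  have hbound : ∀ y ∈ uIcc (1:ℝ) x,
      ‖deriv f y - deriv f 1 - c * (y - 1)‖ ≤ ε / 2 * |x - 1| := by
    intro y hy
    have h1' := (hball (hsub y hy)).2
    have h2' : |y - 1| ≤ |x - 1| := abs_sub_left_of_mem_uIcc hy
    calc ‖deriv f y - deriv f 1 - c * (y - 1)‖
        = ‖deriv f y - deriv f 1 - (y - 1) • c‖ := by rw [smul_eq_mul]; ring_nf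
      _ ≤ ε / 2 * ‖y - 1‖ := h1'
      _ ≤ ε / 2 * |x - 1| := by
          apply mul_le_mul_of_nonneg_left _ (by positivity)
          simpa [Real.norm_eq_abs] using h2'
  have hmvt := (convex_uIcc (1:ℝ) x).norm_image_sub_le_of_norm_hasDerivWithin_le
    hderiv hbound (left_mem_uIcc) (right_mem_uIcc)
  have hφ1 : φ 1 = 0 := by simp [hφ]
  rw [hφ1, sub_zero] at hmvt
  calc ‖f x - f 1 - deriv f 1 * (x - 1) - c / 2 * (x - 1) ^ 2‖ = ‖φ x‖ := rfl
    _ ≤ ε / 2 * |x - 1| * ‖x - 1‖ := hmvt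
    _ ≤ ε * ‖(x - 1) ^ 2‖ := by
        rw [Real.norm_eq_abs, Real.norm_eq_abs, abs_pow]
        nlinarith [abs_nonneg (x - 1), sq_abs (x-1)]

lemma e1 (H : Matrix (Fin 2) (Fin 2) ℝ) : (1 + H).det = 1 + (Matrix.trace H + H.det) := by
  simp [Matrix.det_fin_two, Matrix.trace_fin_two, Matrix.add_apply, Matrix.one_apply]
  ring

lemma e2 (H : Matrix (Fin 2) (Fin 2) ℝ) :
    frobSq (1 + H) = 2 + 2 * Matrix.trace H + frobSq H := by
  simp [frobSq, Fin.sum_univ_two, Matrix.trace_fin_two, Matrix.add_apply, Matrix.one_apply]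
  ring

lemma e3 (H : Matrix (Fin 2) (Fin 2) ℝ) :
    frobSq (dev2 (symPart H)) = frobSq H / 2 - H.det := by
  simp [frobSq, dev2, symPart, Fin.sum_univ_two, Matrix.trace_fin_two, Matrix.sub_apply,
    Matrix.add_apply, Matrix.smul_apply, Matrix.one_apply, Matrix.transpose_apply,
    Matrix.det_fin_two, smul_eq_mul]
  ring

lemma e4 : frobSq (1 : Matrix (Fin 2) (Fin 2) ℝ) = 2 := by
  simp [frobSq, Fin.sum_univ_two, Matrix.one_apply]

lemma hdet_le (H : Matrix (Fin 2) (Fin 2) ℝ) : |H.det| ≤ frobSq H / 2 := by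
  rw [abs_le]
  constructor <;>
  · simp only [Matrix.det_fin_two, frobSq, Fin.sum_univ_two]
    nlinarith [sq_nonneg (H 0 0 - H 1 1), sq_nonneg (H 0 0 + H 1 1),
      sq_nonneg (H 0 1 - H 1 0), sq_nonneg (H 0 1 + H 1 0)]

lemma frobSq_nonneg (H : Matrix (Fin 2) (Fin 2) ℝ) : 0 ≤ frobSq H := by
  apply Finset.sum_nonneg; intro i _; apply Finset.sum_nonneg; intro j _; positivity

lemma ht_sq_le (H : Matrix (Fin 2) (Fin 2) ℝ) (hF : frobSq H ≤ 1) :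
    (Matrix.trace H + H.det) ^ 2 ≤ 5 * frobSq H := by
  have h1 : (Matrix.trace H) ^ 2 ≤ 2 * frobSq H := by
    simp only [Matrix.trace_fin_two, frobSq, Fin.sum_univ_two]
    nlinarith [sq_nonneg (H 0 0 - H 1 1), sq_nonneg (H 0 1), sq_nonneg (H 1 0)]
  have h2 := hdet_le H
  have h3 : H.det ^ 2 ≤ (frobSq H / 2) ^ 2 := by
    rw [← sq_abs]
    exact pow_le_pow_left₀ (abs_nonneg _) h2 2
  have h0 := frobSq_nonneg H
  nlinarith [sq_nonneg (Matrix.trace H - H.det)]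

lemma cont_t : Continuous (fun H : Matrix (Fin 2) (Fin 2) ℝ => Matrix.trace H + H.det) :=
  (continuous_id.matrix_trace).add (continuous_id.matrix_det)

lemma cont_frobSq : Continuous frobSq := by
  unfold frobSq
  fun_prop

/-- **Linearization of the planar Hadamard material.** For
`W(F) = (μ/2)‖F‖² + f(det F)` with `f'(1) = −μ` (stress-free reference), one has
`W(𝟙 + H) = W(𝟙) + μ ‖dev₂ sym H‖² + (f''(1)/2)(tr H)² + o(‖H‖²)` as `H → 0`. -/
theorem hadamard_linearization
    (μ : ℝ) (f : ℝ → ℝ)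
    (hf : ContDiffAt ℝ 2 f 1)
    (hf1 : deriv f 1 = -μ)
    (W : Matrix (Fin 2) (Fin 2) ℝ → ℝ)
    (hW : ∀ F : Matrix (Fin 2) (Fin 2) ℝ, 0 < F.det →
      W F = μ / 2 * frobSq F + f F.det) :
    (fun H : Matrix (Fin 2) (Fin 2) ℝ =>
        W (1 + H) - W 1 - μ * frobSq (dev2 (symPart H))
          - deriv (deriv f) 1 / 2 * (Matrix.trace H) ^ 2)
      =o[nhds 0] (fun H : Matrix (Fin 2) (Fin 2) ℝ => frobSq H) := by
  set c := deriv (deriv f) 1 with hc_def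
  have ht : Tendsto (fun H : Matrix (Fin 2) (Fin 2) ℝ => Matrix.trace H + H.det)
      (nhds 0) (nhds 0) := by
    have := cont_t.tendsto 0
    simpa using this
  have hd1 : Tendsto (fun H : Matrix (Fin 2) (Fin 2) ℝ => 1 + (Matrix.trace H + H.det))
      (nhds 0) (nhds 1) := by
    simpa using tendsto_const_nhds.add ht
  have hg : (fun H : Matrix (Fin 2) (Fin 2) ℝ =>
      f (1 + (Matrix.trace H + H.det)) - f 1 - deriv f 1 * (Matrix.trace H + H.det)
        - c / 2 * (Matrix.trace H + H.det) ^ 2)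
      =o[nhds 0] fun H => (Matrix.trace H + H.det) ^ 2 := by
    have := (taylor2_isLittleO hf).comp_tendsto hd1
    simp only [Function.comp_def, add_sub_cancel_left] at this
    exact this
  have hO : (fun H : Matrix (Fin 2) (Fin 2) ℝ => (Matrix.trace H + H.det) ^ 2)
      =O[nhds 0] frobSq := by
    rw [isBigO_iff]
    refine ⟨5, ?_⟩
    have hev1 : ∀ᶠ H : Matrix (Fin 2) (Fin 2) ℝ in nhds 0, frobSq H ≤ 1 := by
      have h0 : frobSq (0 : Matrix (Fin 2) (Fin 2) ℝ) = 0 := by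
        simp [frobSq]
      have htend : Tendsto frobSq (nhds 0) (nhds 0) := by
        simpa [h0] using cont_frobSq.tendsto 0
      exact htend.eventually (eventually_le_nhds (by norm_num))
    filter_upwards [hev1] with H h1
    rw [Real.norm_eq_abs, Real.norm_eq_abs, abs_of_nonneg (sq_nonneg _),
      abs_of_nonneg (frobSq_nonneg H)]
    exact ht_sq_le H h1
  have hg2 := hg.trans_isBigO hO
  have hdetO : (fun H : Matrix (Fin 2) (Fin 2) ℝ => H.det) =O[nhds 0] frobSq := by
    rw [isBigO_iff]
    refine ⟨1/2, Eventually.of_forall fun H => ?_⟩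
    rw [Real.norm_eq_abs, Real.norm_eq_abs, abs_of_nonneg (frobSq_nonneg H)]
    have := hdet_le H
    linarith
  have hlin : (fun H : Matrix (Fin 2) (Fin 2) ℝ => c / 2 * (2 * Matrix.trace H + H.det))
      =o[nhds 0] (fun _ => (1 : ℝ)) := by
    rw [isLittleO_one_iff]
    have hcont : Continuous (fun H : Matrix (Fin 2) (Fin 2) ℝ =>
        c / 2 * (2 * Matrix.trace H + H.det)) :=
      continuous_const.mul ((continuous_const.mul continuous_id.matrix_trace).add
        continuous_id.matrix_det)
    have := hcont.tendsto 0
    simpa using this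
  have hcube : (fun H : Matrix (Fin 2) (Fin 2) ℝ =>
      c / 2 * (H.det * (2 * Matrix.trace H + H.det))) =o[nhds 0] frobSq := by
    have := hdetO.mul_isLittleO hlin
    simp only [mul_one] at this
    exact this.congr_left fun H => by ring
  have key := hg2.add hcube
  refine key.congr' ?_ (EventuallyEq.refl _ _)
  have hpos : ∀ᶠ H : Matrix (Fin 2) (Fin 2) ℝ in nhds 0, 0 < (1 + H).det := by
    have hdt : Tendsto (fun H : Matrix (Fin 2) (Fin 2) ℝ => (1 + H).det) (nhds 0) (nhds 1) := by
      refine hd1.congr fun H => (e1 H).symm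
    exact hdt.eventually (eventually_gt_nhds (by norm_num))
  filter_upwards [hpos] with H hp
  rw [hW _ hp, hW 1 (by simp), e1, e2, e3, e4, Matrix.det_one, hf1]
  ring
end
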